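/- Let (X,Y_0,Y_1,...,Y_K) take values in finite alphabets; let P = P_{X,Y_0}·∏_{k=1}^K P_{Y_k|X,Y_0} and let Q = Q_{Y_0}·Q_{X|Y_0}·Q_{Y_1,...,Y_K|Y_0} be such that Q has the same (X,Y_0)-marginal and the same (Y_0,Y_1,...,Y_K)-marginal as P. Then for every block length n and all deterministic maps φ_k^{(n)} : Y_k^n → finite sets (k = 1,...,K), the Kullback–Leibler divergence between the induced laws of (φ_1^{(n)}(Y_1^n),...,φ_K^{(n)}(Y_K^n), X^n, Y_0^n) under the n-fold products P^{⊗n} and Q^{⊗n} equals the conditional mutual information under P^{⊗n}: D( P_{φ_1(Y_1^n),...,φ_K(Y_K^n),X^n,Y_0^n} ‖ Q_{φ_1(Y_1^n),...,φ_K(Y_K^n),X^n,Y_0^n} ) = I( φ_1^{(n)}(Y_1^n),...,φ_K^{(n)}(Y_K^n); X^n | Y_0^n ). -/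

import Mathlib

/-!
Since `Q` makes `X` and `(Y₁,…,Y_K)` conditionally independent given `Y₀` and shares the
`(X,Y₀)`- and `(Y₀,Y₁,…,Y_K)`-marginals of `P`, it is the conditional product
`P_{X,Y₀} P_{Y₀,Y} / P_{Y₀}`. This relation tensorizes to the `n`-fold products and survives
encoding the `Y`-block, so the law of `(φ(Yⁿ), Xⁿ, Y₀ⁿ)` under `Q^{⊗n}` is the conditional product
of its law under `P^{⊗n}`; the divergence from a law to its conditional product is, term by term,
the conditional mutual information.
-/

open scoped BigOperators
open Finset
open scoped Classical

namespace DHT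

/-- Pushforward of a distribution on a finite type under a map. -/
noncomputable def push {α β : Type*} [Fintype α] (p : α → ℝ) (f : α → β) : β → ℝ :=
  fun b => ∑ a, if f a = b then p a else 0

/-- Kullback–Leibler divergence between two pmfs on a finite type
(with the usual conventions `0 * log (0 / q) = 0`). -/
noncomputable def klDiv {α : Type*} [Fintype α] (p q : α → ℝ) : ℝ :=
  ∑ a, p a * Real.log (p a / q a)

/-- Conditional mutual information `I(A ; B | C)` of the coordinates of a joint pmf `p`
on a finite product `α × β × γ`. -/
noncomputable def condMI {α β γ : Type*} [Fintype α] [Fintype β] [Fintype γ]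
    (p : α × β × γ → ℝ) : ℝ :=
  ∑ x : α × β × γ,
    p x * Real.log ((p x * (∑ y : α × β × γ, if y.2.2 = x.2.2 then p y else 0)) /
      ((∑ y : α × β × γ, if y.1 = x.1 ∧ y.2.2 = x.2.2 then p y else 0) *
       (∑ y : α × β × γ, if y.2.1 = x.2.1 ∧ y.2.2 = x.2.2 then p y else 0)))

end DHT

namespace DHT

section Push

variable {α β γ : Type*} [Fintype α]

theorem push_nonneg {p : α → ℝ} (hp : ∀ a, 0 ≤ p a) (f : α → β) (b : β) :
    0 ≤ push p f b :=
  sum_nonneg fun a _ => by split_ifs <;> simp [hp a]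

theorem le_push_apply {p : α → ℝ} (hp : ∀ a, 0 ≤ p a) (f : α → β) (a : α) :
    p a ≤ push p f (f a) :=
  calc p a = if f a = f a then p a else 0 := (if_pos rfl).symm
    _ ≤ push p f (f a) := single_le_sum (f := fun a' => if f a' = f a then p a' else 0)
        (fun a' _ => by split_ifs <;> simp [hp a']) (mem_univ a)

theorem push_push [Fintype β] (p : α → ℝ) (f : α → β) (g : β → γ) :
    push (push p f) g = push p (g ∘ f) := by
  funext c
  simp only [push, Function.comp_apply, ite_sum_zero]
  rw [sum_comm]
  refine sum_congr rfl fun a _ => ?_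
  rw [sum_eq_single (f a) (fun b _ hb => by simp [Ne.symm hb]) (by simp)]
  simp

theorem push_equiv (p : α → ℝ) (e : α ≃ β) : push p e = p ∘ e.symm := by
  funext b
  rw [push, sum_eq_single (e.symm b) (fun a _ ha => if_neg (e.eq_symm_apply.not.mp ha)) (by simp)]
  simp

end Push

section Triple

variable {α β γ : Type*} [Fintype α] [Fintype β] [Fintype γ]

theorem push_snd_snd_apply (p : α × β × γ → ℝ) (c : γ) :
    push p (fun t => t.2.2) c = ∑ a, ∑ b, p (a, b, c) := by
  simp [push, Fintype.sum_prod_type]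

theorem push_fst_snd_snd_apply (p : α × β × γ → ℝ) (a : α) (c : γ) :
    push p (fun t => (t.1, t.2.2)) (a, c) = ∑ b, p (a, b, c) := by
  simp [push, Fintype.sum_prod_type, ite_and]

theorem push_snd_apply (p : α × β × γ → ℝ) (b : β) (c : γ) :
    push p Prod.snd (b, c) = ∑ a, p (a, b, c) := by
  simp [push, Fintype.sum_prod_type, ite_and]

-- `q = p_{AC} p_{BC} / p_C`, cleared of the denominator.
def IsCondProduct (q p : α × β × γ → ℝ) : Prop :=
  ∀ a b c, q (a, b, c) * push p (fun t => t.2.2) c =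
    push p (fun t => (t.1, t.2.2)) (a, c) * push p Prod.snd (b, c)

theorem condMI_eq (p : α × β × γ → ℝ) :
    condMI p = ∑ t, p t * Real.log (p t * push p (fun t => t.2.2) t.2.2 /
      (push p (fun t => (t.1, t.2.2)) (t.1, t.2.2) * push p Prod.snd t.2)) := by
  simp only [condMI, push, Prod.ext_iff]

theorem klDiv_eq_condMI_of_isCondProduct {p q : α × β × γ → ℝ} (hp : ∀ t, 0 ≤ p t)
    (hq : IsCondProduct q p) : klDiv p q = condMI p := by
  rw [klDiv, condMI_eq]
  refine sum_congr rfl fun ⟨a, b, c⟩ _ => ?_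
  rcases (hp (a, b, c)).eq_or_lt with h0 | hpos
  · simp [← h0]
  have hC : push p (fun t => t.2.2) c ≠ 0 :=
    (hpos.trans_le (le_push_apply hp (fun t => t.2.2) (a, b, c))).ne'
  rw [← hq a b c, mul_div_mul_right _ _ hC]

theorem push_prodMap_id_apply {δ α' : Type*} [Fintype δ] (r : α × δ → ℝ) (g : α → α')
    (a' : α') (x : δ) : push r (Prod.map g id) (a', x) = ∑ a, if g a = a' then r (a, x) else 0 := by
  simp [push, Fintype.sum_prod_type, ite_and]

theorem IsCondProduct.push_prodMap_id {α' : Type*} [Fintype α'] {q p : α × β × γ → ℝ}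
    (hq : IsCondProduct q p) (g : α → α') :
    IsCondProduct (push q (Prod.map g id)) (push p (Prod.map g id)) := by
  intro a' b c
  simp only [push_push]
  change _ * push p (fun t => t.2.2) c =
    push p (Prod.map g id ∘ fun t => (t.1, t.2.2)) (a', c) * push p Prod.snd (b, c)
  rw [← push_push, push_prodMap_id_apply, push_prodMap_id_apply, sum_mul, sum_mul]
  refine sum_congr rfl fun a _ => ?_
  split_ifs
  · exact hq a b c
  · simp

theorem IsCondProduct.of_factorization {P Q : α × γ × β → ℝ} {f : γ → ℝ} {g : γ → α → ℝ}
    {h : γ → β → ℝ} (hQ : ∀ a c b, Q (a, c, b) = f c * g c a * h c b)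
    (hAC : ∀ a c, ∑ b, Q (a, c, b) = ∑ b, P (a, c, b))
    (hCB : ∀ c b, ∑ a, Q (a, c, b) = ∑ a, P (a, c, b)) :
    IsCondProduct (fun t : β × α × γ => Q (t.2.1, t.2.2, t.1)) (fun t => P (t.2.1, t.2.2, t.1)) := by
  intro b a c
  simp only [push_snd_snd_apply, push_fst_snd_snd_apply, push_snd_apply, ← hAC, ← hCB, hQ,
    ← sum_mul, ← mul_sum]
  ring

end Triple

section Block

variable {ι α β γ : Type*} [Fintype ι] [DecidableEq ι] [Fintype α] [Fintype β] [Fintype γ]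

def blockLaw (p : α × β × γ → ℝ) : (ι → α) × (ι → β) × (ι → γ) → ℝ :=
  fun t => ∏ i, p (t.1 i, t.2.1 i, t.2.2 i)

theorem push_blockLaw_snd_snd_apply (p : α × β × γ → ℝ) (c : ι → γ) :
    push (blockLaw p) (fun t => t.2.2) c = ∏ i, push p (fun t => t.2.2) (c i) := by
  simp_rw [push_snd_snd_apply, Fintype.prod_sum, blockLaw]

theorem push_blockLaw_fst_snd_snd_apply (p : α × β × γ → ℝ) (a : ι → α) (c : ι → γ) :
    push (blockLaw p) (fun t => (t.1, t.2.2)) (a, c) =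
      ∏ i, push p (fun t => (t.1, t.2.2)) (a i, c i) := by
  simp_rw [push_fst_snd_snd_apply, Fintype.prod_sum, blockLaw]

theorem push_blockLaw_snd_apply (p : α × β × γ → ℝ) (b : ι → β) (c : ι → γ) :
    push (blockLaw p) Prod.snd (b, c) = ∏ i, push p Prod.snd (b i, c i) := by
  simp_rw [push_snd_apply, Fintype.prod_sum, blockLaw]

theorem IsCondProduct.blockLaw {q p : α × β × γ → ℝ} (hq : IsCondProduct q p) :
    IsCondProduct (blockLaw q : (ι → α) × (ι → β) × (ι → γ) → ℝ) (blockLaw p) := by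
  intro a b c
  rw [push_blockLaw_snd_snd_apply, push_blockLaw_fst_snd_snd_apply, push_blockLaw_snd_apply,
    DHT.blockLaw, ← prod_mul_distrib, ← prod_mul_distrib]
  exact prod_congr rfl fun i _ => hq _ _ _

end Block

end DHT

open DHT

theorem statement_14_general
    {K : ℕ} {𝒳 𝒴₀ : Type} {𝒴 : Fin K → Type}
    [Fintype 𝒳] [Fintype 𝒴₀] [∀ k, Fintype (𝒴 k)]
    (P Q : 𝒳 × 𝒴₀ × (∀ k, 𝒴 k) → ℝ)
    (hP0 : ∀ ω, 0 ≤ P ω)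
    -- `Q = Q_{Y₀} · Q_{X|Y₀} · Q_{Y₁…Y_K|Y₀}`
    (q0 : 𝒴₀ → ℝ) (qX : 𝒴₀ → 𝒳 → ℝ) (qY : 𝒴₀ → (∀ k, 𝒴 k) → ℝ)
    (hQfact : ∀ x y0 ys, Q (x, y0, ys) = q0 y0 * qX y0 x * qY y0 ys)
    -- same `(X,Y₀)`-marginal and same `(Y₀,Y₁,…,Y_K)`-marginal
    (hMargXY0 : ∀ x y0, ∑ ys, Q (x, y0, ys) = ∑ ys, P (x, y0, ys))
    (hMargY : ∀ y0 ys, ∑ x, Q (x, y0, ys) = ∑ x, P (x, y0, ys))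
    (n : ℕ) (M : Fin K → ℕ)
    (φ : ∀ k : Fin K, (Fin n → 𝒴 k) → Fin (M k)) :
    klDiv
      (push (fun ω : Fin n → 𝒳 × 𝒴₀ × (∀ k, 𝒴 k) => ∏ i, P (ω i))
        (fun ω => ((fun k => φ k fun i => (ω i).2.2 k), fun i => (ω i).1, fun i => (ω i).2.1)))
      (push (fun ω : Fin n → 𝒳 × 𝒴₀ × (∀ k, 𝒴 k) => ∏ i, Q (ω i))
        (fun ω => ((fun k => φ k fun i => (ω i).2.2 k), fun i => (ω i).1, fun i => (ω i).2.1)))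
    = condMI
      (push (fun ω : Fin n → 𝒳 × 𝒴₀ × (∀ k, 𝒴 k) => ∏ i, P (ω i))
        (fun ω => ((fun k => φ k fun i => (ω i).2.2 k), fun i => (ω i).1, fun i => (ω i).2.1))) := by
  let E : (Fin n → 𝒳 × 𝒴₀ × (∀ k, 𝒴 k)) ≃ (Fin n → ∀ k, 𝒴 k) × (Fin n → 𝒳) × (Fin n → 𝒴₀) :=
    { toFun := fun ω => (fun i => (ω i).2.2, fun i => (ω i).1, fun i => (ω i).2.1)
      invFun := fun t i => (t.2.1 i, t.2.2 i, t.1 i)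
      left_inv := fun _ => rfl
      right_inv := fun _ => rfl }
  have hF : (fun ω : Fin n → 𝒳 × 𝒴₀ × (∀ k, 𝒴 k) =>
      ((fun k => φ k fun i => (ω i).2.2 k), fun i => (ω i).1, fun i => (ω i).2.1)) =
      Prod.map (fun ys k => φ k fun i => ys i k) id ∘ E := rfl
  have hletter := IsCondProduct.of_factorization hQfact hMargXY0 hMargY
  rw [hF, ← push_push, ← push_push, push_equiv, push_equiv]
  exact klDiv_eq_condMI_of_isCondProduct
    (push_nonneg (fun t => prod_nonneg fun i _ => hP0 _) _) (hletter.blockLaw.push_prodMap_id _)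

/-- For deterministic encoders applied to i.i.d. blocks, the KL divergence
between the laws of `(φ₁(Y₁ⁿ),…,φ_K(Y_Kⁿ), Xⁿ, Y₀ⁿ)` under `P^{⊗n}` and `Q^{⊗n}` equals the
conditional mutual information `I(φ₁(Y₁ⁿ),…,φ_K(Y_Kⁿ); Xⁿ | Y₀ⁿ)` under `P^{⊗n}`. -/
theorem statement_14
    {K : ℕ} {𝒳 𝒴₀ : Type} {𝒴 : Fin K → Type}
    [Fintype 𝒳] [Fintype 𝒴₀] [∀ k, Fintype (𝒴 k)]
    (P Q : 𝒳 × 𝒴₀ × (∀ k, 𝒴 k) → ℝ)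
    (hP0 : ∀ ω, 0 ≤ P ω) (hP1 : ∑ ω, P ω = 1)
    (hQ0 : ∀ ω, 0 ≤ Q ω) (hQ1 : ∑ ω, Q ω = 1)
    -- `P = P_{X,Y₀} · ∏_k P_{Y_k | X,Y₀}`
    (pXY0 : 𝒳 × 𝒴₀ → ℝ) (w : ∀ k : Fin K, 𝒳 × 𝒴₀ → 𝒴 k → ℝ)
    (hw0 : ∀ k xy y, 0 ≤ w k xy y) (hw1 : ∀ k xy, ∑ y, w k xy y = 1)
    (hPfact : ∀ x y0 ys, P (x, y0, ys) = pXY0 (x, y0) * ∏ k, w k (x, y0) (ys k))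
    -- `Q = Q_{Y₀} · Q_{X|Y₀} · Q_{Y₁…Y_K|Y₀}`
    (q0 : 𝒴₀ → ℝ) (qX : 𝒴₀ → 𝒳 → ℝ) (qY : 𝒴₀ → (∀ k, 𝒴 k) → ℝ)
    (hQfact : ∀ x y0 ys, Q (x, y0, ys) = q0 y0 * qX y0 x * qY y0 ys)
    -- same `(X,Y₀)`-marginal and same `(Y₀,Y₁,…,Y_K)`-marginal
    (hMargXY0 : ∀ x y0, ∑ ys, Q (x, y0, ys) = ∑ ys, P (x, y0, ys))
    (hMargY : ∀ y0 ys, ∑ x, Q (x, y0, ys) = ∑ x, P (x, y0, ys))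
    (n : ℕ) (M : Fin K → ℕ)
    (φ : ∀ k : Fin K, (Fin n → 𝒴 k) → Fin (M k)) :
    klDiv
      (push (fun ω : Fin n → 𝒳 × 𝒴₀ × (∀ k, 𝒴 k) => ∏ i, P (ω i))
        (fun ω => ((fun k => φ k fun i => (ω i).2.2 k), fun i => (ω i).1, fun i => (ω i).2.1)))
      (push (fun ω : Fin n → 𝒳 × 𝒴₀ × (∀ k, 𝒴 k) => ∏ i, Q (ω i))
        (fun ω => ((fun k => φ k fun i => (ω i).2.2 k), fun i => (ω i).1, fun i => (ω i).2.1)))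
    = condMI
      (push (fun ω : Fin n → 𝒳 × 𝒴₀ × (∀ k, 𝒴 k) => ∏ i, P (ω i))
        (fun ω => ((fun k => φ k fun i => (ω i).2.2 k), fun i => (ω i).1, fun i => (ω i).2.1))) :=
  statement_14_general P Q hP0 q0 qX qY hQfact hMargXY0 hMargY n M φ
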